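/- arXiv:1510.05117 — 5 statements merged into one kernel-verified Lean document; each statement's English description precedes it below -/
import Mathlib

section
/- Let G be a graph with some orientation, D its directed incidence matrix, and X its (unsigned) incidence matrix. If the block matrices [[O, D],[D^T, O]] and [[O, X],[X^T, O]] have the same multiset of nonzero eigenvalues, then G is bipartite. -/
/-! Both block matrices are symmetric, so equal nonzero spectra force equal traces of all
positive powers. The `2ℓ`-th power of `[[0, Y], [Yᵀ, 0]]` has trace `2 tr ((Y Yᵀ) ^ ℓ)`, and
`D Dᵀ = Δ - A`, `X Xᵀ = Δ + A` with `Δ` the degree and `A` the adjacency matrix, so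
`tr ((Δ - A) ^ ℓ) = tr ((Δ + A) ^ ℓ)` for every `ℓ ≥ 1`. Expanding both powers into words in
the entrywise nonnegative matrices `Δ` and `A` shows that for odd `ℓ` the difference is at
least `2 tr (A ^ ℓ)`, which counts closed walks of length `ℓ`. Hence `G` has no closed walk of
odd length, i.e. it is bipartite. -/

open Matrix Polynomial

/-- Vertex–edge incidence matrix (unsigned). -/
def vertexEdgeIncMatrix {V : Type*} [Fintype V] [DecidableEq V] (G : SimpleGraph V)
    [DecidableRel G.Adj] : Matrix V G.edgeSet ℝ :=
  Matrix.of fun v e => if v ∈ (e : Sym2 V) then 1 else 0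

/-- Directed incidence matrix with respect to an orientation `o` (edge `e` goes from
`(o e).1` to `(o e).2`): `+1` at the head, `-1` at the tail. -/
def dirIncMatrix {V : Type*} [Fintype V] [DecidableEq V] (G : SimpleGraph V)
    [DecidableRel G.Adj] (o : G.edgeSet → V × V) : Matrix V G.edgeSet ℝ :=
  Matrix.of fun v e => if v = (o e).2 then 1 else if v = (o e).1 then -1 else 0

theorem Multiset.sum_map_filter_ne_zero {α M : Type*} [Zero α] [DecidableEq α]
    [AddCommMonoid M] (s : Multiset α) {f : α → M} (hf : f 0 = 0) :
    ((s.filter (· ≠ 0)).map f).sum = (s.map f).sum := by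
  conv_rhs => rw [← s.filter_add_not (· ≠ 0), Multiset.map_add, Multiset.sum_add]
  suffices ((s.filter (¬ · ≠ 0)).map f).sum = 0 by rw [this, add_zero]
  refine Multiset.sum_eq_zero fun x hx => ?_
  obtain ⟨y, hy, rfl⟩ := Multiset.mem_map.1 hx
  rw [of_not_not (Multiset.of_mem_filter (p := (¬ · ≠ 0)) hy), hf]

namespace Matrix

theorem trace_fromBlocks {R l m : Type*} [AddCommMonoid R] [Fintype l] [Fintype m]
    (A : Matrix l l R) (B : Matrix l m R) (C : Matrix m l R) (D : Matrix m m R) :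
    (fromBlocks A B C D).trace = A.trace + D.trace := by
  simp [trace, Fintype.sum_sum_type]

theorem trace_mul_pow_comm {R m n : Type*} [CommSemiring R] [Fintype m] [Fintype n]
    [DecidableEq m] [DecidableEq n] (B : Matrix m n R) (C : Matrix n m R) {k : ℕ} (hk : k ≠ 0) :
    ((B * C) ^ k).trace = ((C * B) ^ k).trace := by
  have hpow (j : ℕ) : (B * C) ^ (j + 1) = B * ((C * B) ^ j * C) := by
    induction j with
    | zero => simp
    | succ j ih => rw [pow_succ, ih, pow_succ]; simp only [Matrix.mul_assoc]
  obtain ⟨j, rfl⟩ := Nat.exists_eq_succ_of_ne_zero hk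
  rw [hpow, trace_mul_comm, Matrix.mul_assoc, ← pow_succ]

theorem trace_fromBlocks_zero_pow_two_mul {R m n : Type*} [CommSemiring R] [Fintype m]
    [Fintype n] [DecidableEq m] [DecidableEq n] (B : Matrix m n R) (C : Matrix n m R) {k : ℕ}
    (hk : k ≠ 0) : ((fromBlocks 0 B C 0) ^ (2 * k)).trace = 2 * ((B * C) ^ k).trace := by
  have hsq : (fromBlocks 0 B C 0) ^ 2 = fromBlocks (B * C) 0 0 (C * B) := by
    simp [sq, fromBlocks_multiply]
  rw [pow_mul, hsq, fromBlocks_diagonal_pow, trace_fromBlocks, ← trace_mul_pow_comm B C hk,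
    two_mul]

namespace IsHermitian

variable {𝕜 n : Type*} [RCLike 𝕜] [Fintype n] [DecidableEq n] {A B : Matrix n n 𝕜}

theorem trace_pow_eq_sum_roots_charpoly_pow (hA : A.IsHermitian) (k : ℕ) :
    (A ^ k).trace = (A.charpoly.roots.map (· ^ k)).sum := by
  conv_lhs => rw [hA.spectral_theorem, ← map_pow, Unitary.conjStarAlgAut_apply, trace_mul_cycle,
    Unitary.coe_star_mul_self, one_mul, diagonal_pow, trace_diagonal]
  simp [hA.roots_charpoly_eq_eigenvalues, Multiset.map_map]

theorem trace_pow_eq_of_filter_roots_charpoly_eq [DecidableEq 𝕜] (hA : A.IsHermitian)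
    (hB : B.IsHermitian)
    (h : A.charpoly.roots.filter (· ≠ 0) = B.charpoly.roots.filter (· ≠ 0)) {k : ℕ}
    (hk : k ≠ 0) : (A ^ k).trace = (B ^ k).trace := by
  rw [hA.trace_pow_eq_sum_roots_charpoly_pow, hB.trace_pow_eq_sum_roots_charpoly_pow,
    ← Multiset.sum_map_filter_ne_zero _ (zero_pow hk), h,
    Multiset.sum_map_filter_ne_zero _ (zero_pow hk)]

end IsHermitian

def EntrywiseNonneg {m n R : Type*} [Zero R] [LE R] (M : Matrix m n R) : Prop :=
  ∀ i j, 0 ≤ M i j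

namespace EntrywiseNonneg

variable {l m n R : Type*} [Ring R] [PartialOrder R] [IsOrderedRing R]

theorem add {A B : Matrix m n R} (hA : A.EntrywiseNonneg) (hB : B.EntrywiseNonneg) :
    (A + B).EntrywiseNonneg :=
  fun i j => add_nonneg (hA i j) (hB i j)

theorem mul [Fintype m] {A : Matrix l m R} {B : Matrix m n R} (hA : A.EntrywiseNonneg)
    (hB : B.EntrywiseNonneg) : (A * B).EntrywiseNonneg :=
  fun i j => Finset.sum_nonneg fun k _ => mul_nonneg (hA i k) (hB k j)

theorem nsmul {A : Matrix m n R} (hA : A.EntrywiseNonneg) (k : ℕ) : (k • A).EntrywiseNonneg :=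
  fun i j => nsmul_nonneg (hA i j) k

theorem one [DecidableEq n] : (1 : Matrix n n R).EntrywiseNonneg := fun i j => by
  by_cases h : i = j <;> simp [one_apply, h]

variable [Fintype n] [DecidableEq n] {A B : Matrix n n R}

theorem pow (hA : A.EntrywiseNonneg) (k : ℕ) : (A ^ k).EntrywiseNonneg := by
  induction k with
  | zero => exact pow_zero A ▸ one
  | succ k ih => exact pow_succ A k ▸ ih.mul hA

omit [DecidableEq n] in
theorem trace_nonneg (hA : A.EntrywiseNonneg) : 0 ≤ A.trace :=
  Finset.sum_nonneg fun i _ => hA i i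

theorem add_pow_add_sub_pow (hA : A.EntrywiseNonneg) (hB : B.EntrywiseNonneg) (k : ℕ) :
    ((A + B) ^ k + (A - B) ^ k - 2 • A ^ k).EntrywiseNonneg ∧
      ((A + B) ^ k - (A - B) ^ k).EntrywiseNonneg := by
  induction k with
  | zero =>
    simp only [pow_zero, sub_self, two_nsmul]
    exact ⟨fun _ _ => le_rfl, fun _ _ => le_rfl⟩
  | succ k ih =>
    obtain ⟨heven, hodd⟩ := ih
    constructor
    · have h : (A + B) ^ (k + 1) + (A - B) ^ (k + 1) - 2 • A ^ (k + 1) =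
          A * ((A + B) ^ k + (A - B) ^ k - 2 • A ^ k) + B * ((A + B) ^ k - (A - B) ^ k) := by
        simp only [pow_succ']; noncomm_ring
      exact h ▸ (hA.mul heven).add (hB.mul hodd)
    · have h : (A + B) ^ (k + 1) - (A - B) ^ (k + 1) =
          A * ((A + B) ^ k - (A - B) ^ k) +
            B * (((A + B) ^ k + (A - B) ^ k - 2 • A ^ k) + 2 • A ^ k) := by
        simp only [pow_succ']; noncomm_ring
      exact h ▸ (hA.mul hodd).add (hB.mul (heven.add ((hA.pow k).nsmul 2)))

theorem add_pow_sub_sub_pow_of_odd (hA : A.EntrywiseNonneg) (hB : B.EntrywiseNonneg) {k : ℕ}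
    (hk : Odd k) : ((B + A) ^ k - (B - A) ^ k - 2 • A ^ k).EntrywiseNonneg := by
  have h : (B + A) ^ k - (B - A) ^ k = (A + B) ^ k + (A - B) ^ k := by
    rw [add_comm B, ← neg_sub A B, hk.neg_pow, sub_neg_eq_add]
  exact h ▸ (add_pow_add_sub_pow hA hB k).1

end EntrywiseNonneg

end Matrix

namespace SimpleGraph

variable {V : Type*} (G : SimpleGraph V) [DecidableRel G.Adj]

theorem adjMatrix_entrywiseNonneg : (G.adjMatrix ℝ).EntrywiseNonneg := fun i j => by
  by_cases h : G.Adj i j <;> simp [h]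

variable [Fintype V] [DecidableEq V]

theorem mul_transpose_eq_degMatrix_add_smul_adjMatrix {R : Type*} [Ring R]
    (Y : Matrix V G.edgeSet R) (σ : R)
    (hzero : ∀ v (e : G.edgeSet), v ∉ (e : Sym2 V) → Y v e = 0)
    (hsq : ∀ v (e : G.edgeSet), v ∈ (e : Sym2 V) → Y v e * Y v e = 1)
    (hoff : ∀ u v (e : G.edgeSet), u ≠ v → (e : Sym2 V) = s(u, v) → Y u e * Y v e = σ) :
    Y * Yᵀ = G.degMatrix R + σ • G.adjMatrix R := by
  ext u v
  simp only [mul_apply, transpose_apply, Matrix.add_apply, Matrix.smul_apply, degMatrix,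
    adjMatrix_apply, smul_eq_mul]
  by_cases huv : u = v
  · subst huv
    have hterm : ∀ e : G.edgeSet, Y u e * Y u e = if u ∈ (e : Sym2 V) then 1 else 0 := by
      intro e
      split_ifs with he
      · exact hsq u e he
      · rw [hzero u e he, zero_mul]
    rw [Finset.sum_congr rfl fun e _ => hterm e,
      ← Finset.sum_subtype G.edgeFinset (fun _ => mem_edgeFinset)
        fun e => if u ∈ e then 1 else 0,
      Finset.sum_boole, ← incidenceFinset_eq_filter, card_incidenceFinset_eq_degree]
    simp
  · have hterm : ∀ e : G.edgeSet, Y u e * Y v e = if (e : Sym2 V) = s(u, v) then σ else 0 := by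
      intro e
      split_ifs with he
      · exact hoff u v e huv he
      · rcases not_and_or.1 (mt (Sym2.mem_and_mem_iff huv).1 he) with hu | hv
        · rw [hzero u e hu, zero_mul]
        · rw [hzero v e hv, mul_zero]
    rw [Finset.sum_congr rfl fun e _ => hterm e,
      ← Finset.sum_subtype G.edgeFinset (fun _ => mem_edgeFinset)
        fun e => if e = s(u, v) then σ else 0,
      Finset.sum_ite_eq']
    simp [huv]

theorem dirIncMatrix_mul_transpose (o : G.edgeSet → V × V)
    (ho : ∀ e : G.edgeSet, (e : Sym2 V) = s((o e).1, (o e).2)) :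
    dirIncMatrix G o * (dirIncMatrix G o)ᵀ = G.lapMatrix ℝ := by
  have hne : ∀ e, (o e).1 ≠ (o e).2 := fun e h =>
    G.not_isDiag_of_mem_edgeSet e.2 (by rw [ho e]; exact Sym2.mk_isDiag_iff.2 h)
  rw [mul_transpose_eq_degMatrix_add_smul_adjMatrix G _ (-1), neg_one_smul, ← sub_eq_add_neg,
    lapMatrix]
  · intro v e hv
    rw [ho e, Sym2.mem_iff, not_or] at hv
    simp [dirIncMatrix, hv.1, hv.2]
  · intro v e hv
    rw [ho e, Sym2.mem_iff] at hv
    rcases hv with rfl | rfl <;> simp [dirIncMatrix, hne e]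
  · intro u v e huv he
    rw [ho e, Sym2.eq_iff] at he
    rcases he with ⟨rfl, rfl⟩ | ⟨rfl, rfl⟩ <;> simp [dirIncMatrix, hne e]

theorem vertexEdgeIncMatrix_mul_transpose :
    vertexEdgeIncMatrix G * (vertexEdgeIncMatrix G)ᵀ = G.degMatrix ℝ + G.adjMatrix ℝ := by
  rw [mul_transpose_eq_degMatrix_add_smul_adjMatrix G _ 1, one_smul] <;>
    intros <;> simp_all [vertexEdgeIncMatrix]

theorem degMatrix_entrywiseNonneg : (G.degMatrix ℝ).EntrywiseNonneg := fun i j => by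
  by_cases h : i = j <;> simp [degMatrix, h]

theorem trace_adjMatrix_pow_pos {u : V} (w : G.Walk u u) :
    0 < (G.adjMatrix ℝ ^ w.length).trace := by
  refine Finset.sum_pos' (fun i _ => (G.adjMatrix_entrywiseNonneg.pow _) i i)
    ⟨u, Finset.mem_univ u, ?_⟩
  rw [diag_apply, adjMatrix_pow_apply_eq_card_walk]
  have : 0 < Fintype.card {p : G.Walk u u | p.length = w.length} :=
    Fintype.card_pos_iff.2 ⟨⟨w, rfl⟩⟩
  exact_mod_cast this

theorem trace_lapMatrix_pow_lt_of_odd {u : V} (w : G.Walk u u) (hw : Odd w.length) :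
    (G.lapMatrix ℝ ^ w.length).trace <
      ((G.degMatrix ℝ + G.adjMatrix ℝ) ^ w.length).trace := by
  have h := (G.adjMatrix_entrywiseNonneg.add_pow_sub_sub_pow_of_odd
    G.degMatrix_entrywiseNonneg hw).trace_nonneg
  rw [trace_sub, trace_sub, trace_smul, two_nsmul] at h
  have := G.trace_adjMatrix_pow_pos w
  rw [lapMatrix]
  linarith

end SimpleGraph

/-- If for some orientation of `G` the block matrices `[[0, D], [Dᵀ, 0]]` and
`[[0, X], [Xᵀ, 0]]` have the same multiset of nonzero eigenvalues, then `G` is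
bipartite (i.e. 2-colorable). -/
theorem bipartite_of_same_nonzero_spectrum {V : Type*} [Fintype V] [DecidableEq V]
    (G : SimpleGraph V) [DecidableRel G.Adj] (o : G.edgeSet → V × V)
    (ho : ∀ e : G.edgeSet, (e : Sym2 V) = s((o e).1, (o e).2))
    (hspec :
      (Matrix.charpoly
          (Matrix.fromBlocks 0 (dirIncMatrix G o) (dirIncMatrix G o)ᵀ 0)).roots.filter
          (fun x => x ≠ 0) =
        (Matrix.charpoly
            (Matrix.fromBlocks 0 (vertexEdgeIncMatrix G) (vertexEdgeIncMatrix G)ᵀ 0)).roots.filter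
          (fun x => x ≠ 0)) :
    G.Colorable 2 := by
  refine SimpleGraph.two_colorable_iff_forall_loop_even.2 fun u w =>
    Nat.not_odd_iff_even.1 fun hodd => ?_
  have hℓ : w.length ≠ 0 := hodd.pos.ne'
  have hherm : ∀ Y : Matrix V G.edgeSet ℝ, (fromBlocks 0 Y Yᵀ 0).IsHermitian := fun Y =>
    isHermitian_zero.fromBlocks (conjTranspose_eq_transpose_of_trivial Y) isHermitian_zero
  have htrace := (hherm _).trace_pow_eq_of_filter_roots_charpoly_eq (hherm _) hspec
    (k := 2 * w.length) (mul_ne_zero two_ne_zero hℓ)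
  rw [trace_fromBlocks_zero_pow_two_mul _ _ hℓ,
    trace_fromBlocks_zero_pow_two_mul _ _ hℓ, G.dirIncMatrix_mul_transpose o ho,
    G.vertexEdgeIncMatrix_mul_transpose] at htrace
  linarith [G.trace_lapMatrix_pow_lt_of_odd w hodd]
end

section
/- For any graph G and any integer k ≥ 1 and any i with 1 ≤ i ≤ k, the number 4·cos²(πi/(2k+1)) is a Laplacian eigenvalue of G with multiplicity at least p_k(G) − q_k(G). -/
open Matrix Polynomial Real

/-- A walk `w` from `u` to `v` is a pendant path of length `k` if it is a path of length
`k`, its end `u` has degree `1`, its end `v` has degree at least `3`, and all internal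
vertices have degree `2`. -/
def IsPendantPath {V : Type*} [Fintype V] [DecidableEq V] (G : SimpleGraph V)
    [DecidableRel G.Adj] {u v : V} (w : G.Walk u v) (k : ℕ) : Prop :=
  w.IsPath ∧ w.length = k ∧ G.degree u = 1 ∧ 3 ≤ G.degree v ∧
    ∀ x ∈ w.support, x ≠ u → x ≠ v → G.degree x = 2

/-- `pendantPathCount G k` is `p_k(G)`, the number of pendant paths of length `k` of `G`. -/
noncomputable def pendantPathCount {V : Type*} [Fintype V] [DecidableEq V]
    (G : SimpleGraph V) [DecidableRel G.Adj] (k : ℕ) : ℕ :=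
  Nat.card {p : (u : V) × (v : V) × G.Walk u v // IsPendantPath G p.2.2 k}

/-- `pendantAttachCount G k` is `q_k(G)`, the number of vertices of degree at least `3`
which are an end vertex of some pendant path of length `k`. -/
noncomputable def pendantAttachCount {V : Type*} [Fintype V] [DecidableEq V]
    (G : SimpleGraph V) [DecidableRel G.Adj] (k : ℕ) : ℕ :=
  Nat.card {v : V // 3 ≤ G.degree v ∧ ∃ u, ∃ w : G.Walk u v, IsPendantPath G w k}

/-!
Along a pendant path `u = x₀, x₁, …, x_k = v` put `f (x_j) = sin ((k - j) θ)`, and `f = 0`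
elsewhere, with `θ = π - 2πi/(2k+1)`, so that `4 cos² (πi/(2k+1)) = 2 - 2 cos θ =: μ`. The
three-term recurrence of the sines gives `(L f)(x_j) = μ f (x_j)` at the internal vertices; at the
leaf `u` this needs `sin ((k+1) θ) = sin (k θ)`, which is what the choice of `θ` ensures; and
`(L f)(v) = -sin θ` whatever the path. So `L - μ` maps the span of the `p_k` vectors `f` into the
span of the `q_k` indicator vectors of attachment vertices, and rank–nullity gives an eigenspace
of dimension at least `p_k - q_k`. The vectors `f` are independent because `f` vanishes at the
leaves of all other pendant paths (a pendant path is determined by its leaf), and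
`sin (k θ) = ± sin (πi/(2k+1)) ≠ 0`. Geometric multiplicity bounds algebraic multiplicity.
-/

open Module

theorem LinearMap.card_sub_card_le_finrank_ker {K E F ι κ : Type*} [Field K]
    [AddCommGroup E] [Module K E] [FiniteDimensional K E] [AddCommGroup F] [Module K F]
    [Fintype ι] [Fintype κ] (T : E →ₗ[K] F) {b : ι → E} (hb : LinearIndependent K b)
    (c : κ → F) (hTb : ∀ a, T (b a) ∈ Submodule.span K (Set.range c)) :
    Fintype.card ι - Fintype.card κ ≤ finrank K (LinearMap.ker T) := by
  set W := Submodule.span K (Set.range b)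
  have hrange : LinearMap.range (T.domRestrict W) ≤ Submodule.span K (Set.range c) := by
    rw [LinearMap.range_domRestrict, Submodule.map_span_le]
    rintro _ ⟨a, rfl⟩
    exact hTb a
  have hker : finrank K (LinearMap.ker (T.domRestrict W)) ≤ finrank K (LinearMap.ker T) := by
    rw [LinearMap.ker_domRestrict, ← Submodule.finrank_map_subtype_eq]
    exact Submodule.finrank_mono (Submodule.map_comap_le _ _)
  have : FiniteDimensional K (Submodule.span K (Set.range c)) :=
    FiniteDimensional.span_of_finite K (Set.finite_range c)
  have hrank := (T.domRestrict W).finrank_range_add_finrank_ker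
  have hc := (Submodule.finrank_mono hrange).trans (finrank_range_le_card c)
  rw [finrank_span_eq_card hb] at hrank
  omega

theorem linearIndependent_of_apply_eq_zero {K n ι : Type*} [Field K] {b : ι → n → K}
    (x : ι → n) (hdiag : ∀ a, b a (x a) ≠ 0) (hoff : ∀ a a', a ≠ a' → b a (x a') = 0) :
    LinearIndependent K b := by
  classical
  rw [linearIndependent_iff']
  intro s g hg a ha
  have h := congrFun hg (x a)
  rw [Finset.sum_apply, Finset.sum_eq_single_of_mem a ha
    (fun a' _ ha' => by simp [hoff a' a ha'])] at h
  simpa [hdiag a] using h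

theorem two_sub_two_mul_cos_mul_sin (θ r : ℝ) :
    (2 - 2 * cos θ) * sin (r * θ) = 2 * sin (r * θ) - sin ((r + 1) * θ) - sin ((r - 1) * θ) := by
  rw [show (r + 1) * θ = r * θ + θ by ring, show (r - 1) * θ = r * θ - θ by ring, sin_add,
    sin_sub]
  ring

theorem four_mul_cos_sq_eq_two_sub_two_mul_cos_pi_sub (φ : ℝ) :
    4 * cos φ ^ 2 = 2 - 2 * cos (π - 2 * φ) := by
  rw [cos_pi_sub, cos_two_mul]
  ring

section Trig

variable {k i : ℕ}

theorem sin_mul_pi_sub_two_mul {φ : ℝ} (hik : i ≤ k) (hφ : (2 * k + 1) * φ = i * π) :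
    sin (k * (π - 2 * φ)) = (-1) ^ (k - i) * sin φ := by
  rw [← sin_add_nat_mul_pi, Nat.cast_sub hik]
  congr 1
  linear_combination -hφ

theorem sin_succ_mul_pi_sub_two_mul {φ : ℝ} (hik : i ≤ k) (hφ : (2 * k + 1) * φ = i * π) :
    sin ((k + 1) * (π - 2 * φ)) = (-1) ^ (k - i) * sin φ := by
  rw [← sin_pi_sub φ, ← sin_add_nat_mul_pi, Nat.cast_sub hik]
  congr 1
  linear_combination -hφ

private theorem two_mul_add_one_mul_div (k i : ℕ) :
    (2 * k + 1) * (π * i / (2 * k + 1)) = i * π := by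
  field_simp

theorem sin_succ_mul_eq_sin_mul (hik : i ≤ k) :
    sin ((k + 1) * (π - 2 * (π * i / (2 * k + 1)))) =
      sin (k * (π - 2 * (π * i / (2 * k + 1)))) := by
  rw [sin_succ_mul_pi_sub_two_mul hik (two_mul_add_one_mul_div k i),
    sin_mul_pi_sub_two_mul hik (two_mul_add_one_mul_div k i)]

theorem sin_mul_pi_sub_two_mul_ne_zero (hi : 1 ≤ i) (hik : i ≤ k) :
    sin (k * (π - 2 * (π * i / (2 * k + 1)))) ≠ 0 := by
  have hφ : π * i / (2 * k + 1) < π := by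
    rw [div_lt_iff₀ (by positivity)]
    nlinarith [pi_pos, (Nat.cast_le (α := ℝ)).2 hik]
  rw [sin_mul_pi_sub_two_mul hik (two_mul_add_one_mul_div k i)]
  exact mul_ne_zero (pow_ne_zero _ (by norm_num)) (sin_pos_of_pos_of_lt_pi (by positivity) hφ).ne'

end Trig

section

open SimpleGraph

variable {V : Type*} [Fintype V] [DecidableEq V] {G : SimpleGraph V} [DecidableRel G.Adj]
  {u v x : V} {w : G.Walk u v} {k j : ℕ} {θ : ℝ}

namespace IsPendantPath

theorem length_pos (hw : IsPendantPath G w k) : 0 < k := by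
  obtain ⟨-, hlen, hu, hv, -⟩ := hw
  cases w with
  | nil => omega
  | cons =>
    rw [Walk.length_cons] at hlen
    omega

theorem getVert_inj (hw : IsPendantPath G w k) {a b : ℕ} (ha : a ≤ k) (hb : b ≤ k) :
    w.getVert a = w.getVert b ↔ a = b :=
  ⟨fun h => hw.1.getVert_injOn (show a ≤ w.length by rw [hw.2.1]; omega)
    (show b ≤ w.length by rw [hw.2.1]; omega) h, congrArg _⟩

theorem getVert_length (hw : IsPendantPath G w k) : w.getVert k = v := by
  rw [← hw.2.1, w.getVert_length]

theorem adj_getVert_succ (hw : IsPendantPath G w k) (hj : j < k) :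
    G.Adj (w.getVert j) (w.getVert (j + 1)) :=
  w.adj_getVert_succ (by rw [hw.2.1]; omega)

theorem degree_getVert (hw : IsPendantPath G w k) (h0 : 0 < j) (hj : j < k) :
    G.degree (w.getVert j) = 2 :=
  hw.2.2.2.2 _ (w.getVert_mem_support j)
    (by rw [Ne, hw.1.getVert_eq_start_iff (by rw [hw.2.1]; omega)]; omega)
    (by rw [Ne, hw.1.getVert_eq_end_iff (by rw [hw.2.1]; omega), hw.2.1]; omega)

theorem neighborFinset_start (hw : IsPendantPath G w k) :
    G.neighborFinset u = {w.getVert 1} := by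
  refine (Finset.eq_of_subset_of_card_le ?_ ?_).symm
  · simpa using hw.adj_getVert_succ hw.length_pos
  · rw [G.card_neighborFinset_eq_degree, hw.2.2.1, Finset.card_singleton]

theorem neighborFinset_getVert (hw : IsPendantPath G w k) (h0 : 0 < j) (hj : j < k) :
    G.neighborFinset (w.getVert j) = {w.getVert (j - 1), w.getVert (j + 1)} := by
  refine (Finset.eq_of_subset_of_card_le ?_ ?_).symm
  · have hprev := hw.adj_getVert_succ (j := j - 1) (by omega)
    rw [Nat.sub_add_cancel h0] at hprev
    simpa [Finset.insert_subset_iff] using ⟨hprev.symm, hw.adj_getVert_succ hj⟩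
  · rw [G.card_neighborFinset_eq_degree, hw.degree_getVert h0 hj, Finset.card_pair]
    rw [Ne, hw.getVert_inj (by omega) (by omega)]
    omega

theorem eq_getVert_of_adj (hw : IsPendantPath G w k) {x : V} (hj : j < k)
    (hx : G.Adj (w.getVert j) x) :
    x = w.getVert (j + 1) ∨ 0 < j ∧ x = w.getVert (j - 1) := by
  rw [← G.mem_neighborFinset] at hx
  rcases j.eq_zero_or_pos with rfl | h0
  · rw [Walk.getVert_zero, hw.neighborFinset_start, Finset.mem_singleton] at hx
    exact Or.inl hx
  · rw [hw.neighborFinset_getVert h0 hj, Finset.mem_insert, Finset.mem_singleton] at hx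
    tauto

theorem getVert_eq (hw : IsPendantPath G w k) {v' : V} {w' : G.Walk u v'}
    (hw' : IsPendantPath G w' k) (hj : j ≤ k) : w.getVert j = w'.getVert j := by
  suffices h : ∀ j, j + 1 ≤ k →
      w.getVert j = w'.getVert j ∧ w.getVert (j + 1) = w'.getVert (j + 1) by
    rcases j.eq_zero_or_pos with rfl | h0
    · simp
    · simpa [Nat.sub_add_cancel h0] using (h (j - 1) (by omega)).2
  intro j hj
  induction j with
  | zero =>
    have h1 := hw'.adj_getVert_succ hw'.length_pos
    rw [Walk.getVert_zero, ← G.mem_neighborFinset, hw.neighborFinset_start,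
      Finset.mem_singleton] at h1
    simpa using h1.symm
  | succ j ih =>
    obtain ⟨h0, h1⟩ := ih (by omega)
    refine ⟨h1, ?_⟩
    have hadj := hw'.adj_getVert_succ (j := j + 1) (by omega)
    rw [← h1] at hadj
    rcases hw.eq_getVert_of_adj (by omega) hadj with h | ⟨-, h⟩
    · exact h.symm
    · rw [Nat.add_sub_cancel, h0, hw'.getVert_inj (by omega) (by omega)] at h
      omega

end IsPendantPath

variable (G) in
abbrev PendantPath (k : ℕ) : Type _ :=
  {p : (u : V) × (v : V) × G.Walk u v // IsPendantPath G p.2.2 k}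

theorem PendantPath.fst_injective : Function.Injective (fun p : PendantPath G k => p.1.1) := by
  rintro ⟨⟨u, v, w⟩, hw⟩ ⟨⟨u', v', w'⟩, hw'⟩ (rfl : u = u')
  dsimp only at hw hw'
  obtain rfl : v = v' := by
    rw [← hw.getVert_length, ← hw'.getVert_length, hw.getVert_eq hw' le_rfl]
  obtain rfl : w = w' := Walk.ext_getVert_le_length (by rw [hw.2.1, hw'.2.1])
    fun j hj => hw.getVert_eq hw' (by rwa [← hw.2.1])
  rfl

instance : Finite (PendantPath G k) :=
  Finite.of_injective _ PendantPath.fst_injective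

noncomputable def pendantVec (θ : ℝ) {u v : V} (w : G.Walk u v) : V → ℝ :=
  fun x => ∑ j ∈ Finset.range w.length, if x = w.getVert j then sin ((w.length - j) * θ) else 0

namespace IsPendantPath

theorem pendantVec_getVert (hw : IsPendantPath G w k) (hj : j ≤ k) :
    pendantVec θ w (w.getVert j) = sin ((k - j) * θ) := by
  rw [pendantVec, hw.2.1, Finset.sum_eq_single j]
  · simp
  · intro b hb hbj
    rw [Finset.mem_range] at hb
    rw [if_neg (by rw [hw.getVert_inj hj hb.le]; exact Ne.symm hbj)]
  · intro hj'
    obtain rfl : j = k := by rw [Finset.mem_range] at hj'; omega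
    simp

theorem pendantVec_start (hw : IsPendantPath G w k) : pendantVec θ w u = sin (k * θ) := by
  simpa using hw.pendantVec_getVert (θ := θ) (Nat.zero_le k)

theorem exists_getVert_of_pendantVec_ne_zero (hw : IsPendantPath G w k)
    (hx : pendantVec θ w x ≠ 0) : ∃ j < k, x = w.getVert j := by
  contrapose! hx
  refine Finset.sum_eq_zero fun j hj => if_neg (hx j ?_)
  rw [Finset.mem_range, hw.2.1] at hj
  exact hj

theorem eq_of_adj_of_pendantVec_ne_zero (hw : IsPendantPath G w k)
    (hx : ∀ j < k, x ≠ w.getVert j) {y : V} (hxy : G.Adj x y) (hy : pendantVec θ w y ≠ 0) :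
    x = v ∧ y = w.getVert (k - 1) := by
  obtain ⟨j, hj, rfl⟩ := hw.exists_getVert_of_pendantVec_ne_zero hy
  rcases hw.eq_getVert_of_adj hj hxy.symm with h | ⟨h0, h⟩
  · obtain rfl : j + 1 = k := by
      by_contra hne
      exact hx (j + 1) (by omega) h
    exact ⟨h.trans hw.getVert_length, rfl⟩
  · exact absurd h (hx (j - 1) (by omega))

theorem lapMatrix_mulVec_pendantVec_start (hw : IsPendantPath G w k)
    (hθ : sin ((k + 1) * θ) = sin (k * θ)) :
    (G.lapMatrix ℝ *ᵥ pendantVec θ w) u = (2 - 2 * cos θ) * pendantVec θ w u := by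
  rw [lapMatrix_mulVec_apply, hw.neighborFinset_start, Finset.sum_singleton,
    hw.pendantVec_getVert hw.length_pos, hw.pendantVec_start, hw.2.2.1,
    two_sub_two_mul_cos_mul_sin, hθ]
  push_cast
  ring

theorem lapMatrix_mulVec_pendantVec_getVert (hw : IsPendantPath G w k) (h0 : 0 < j)
    (hj : j < k) :
    (G.lapMatrix ℝ *ᵥ pendantVec θ w) (w.getVert j) =
      (2 - 2 * cos θ) * pendantVec θ w (w.getVert j) := by
  have hne : w.getVert (j - 1) ≠ w.getVert (j + 1) := by
    rw [Ne, hw.getVert_inj (by omega) (by omega)]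
    omega
  rw [lapMatrix_mulVec_apply, hw.neighborFinset_getVert h0 hj, Finset.sum_pair hne,
    hw.degree_getVert h0 hj, hw.pendantVec_getVert hj.le, hw.pendantVec_getVert (by omega),
    hw.pendantVec_getVert (by omega), two_sub_two_mul_cos_mul_sin]
  push_cast [Nat.cast_sub h0]
  ring_nf

theorem sum_neighborFinset_pendantVec (hw : IsPendantPath G w k)
    (hx : ∀ j < k, x ≠ w.getVert j) :
    ∑ y ∈ G.neighborFinset x, pendantVec θ w y = sin θ * (Pi.single v 1 : V → ℝ) x := by
  by_cases hxv : x = v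
  · subst hxv
    have hlast := hw.adj_getVert_succ (j := k - 1) (by have := hw.length_pos; omega)
    rw [Nat.sub_add_cancel hw.length_pos, hw.getVert_length] at hlast
    rw [Pi.single_eq_same, mul_one, Finset.sum_eq_single_of_mem (w.getVert (k - 1))
      ((G.mem_neighborFinset _ _).2 hlast.symm)]
    · rw [hw.pendantVec_getVert (Nat.sub_le k 1), Nat.cast_sub hw.length_pos]
      ring_nf
    · intro y hy hne
      by_contra h
      exact hne (hw.eq_of_adj_of_pendantVec_ne_zero hx ((G.mem_neighborFinset _ _).1 hy) h).2
  · rw [Pi.single_eq_of_ne hxv, mul_zero]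
    refine Finset.sum_eq_zero fun y hy => ?_
    by_contra h
    exact hxv (hw.eq_of_adj_of_pendantVec_ne_zero hx ((G.mem_neighborFinset _ _).1 hy) h).1

theorem lapMatrix_mulVec_pendantVec (hw : IsPendantPath G w k)
    (hθ : sin ((k + 1) * θ) = sin (k * θ)) :
    G.lapMatrix ℝ *ᵥ pendantVec θ w =
      (2 - 2 * cos θ) • pendantVec θ w - sin θ • Pi.single v 1 := by
  funext x
  simp only [Pi.sub_apply, Pi.smul_apply, smul_eq_mul]
  by_cases hx : ∃ j < k, x = w.getVert j
  · obtain ⟨j, hj, rfl⟩ := hx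
    have hv : w.getVert j ≠ v := fun h => by
      have := (hw.getVert_inj hj.le le_rfl).1 (h.trans hw.getVert_length.symm)
      omega
    rw [Pi.single_eq_of_ne hv, mul_zero, sub_zero]
    rcases j.eq_zero_or_pos with rfl | h0
    · simpa using hw.lapMatrix_mulVec_pendantVec_start hθ
    · exact hw.lapMatrix_mulVec_pendantVec_getVert h0 hj
  · push Not at hx
    have hf : pendantVec θ w x = 0 := by
      by_contra h
      obtain ⟨j, hj, rfl⟩ := hw.exists_getVert_of_pendantVec_ne_zero h
      exact hx j hj rfl
    rw [lapMatrix_mulVec_apply, hw.sum_neighborFinset_pendantVec hx, hf]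
    ring

end IsPendantPath

theorem PendantPath.pendantVec_fst_eq_zero {p q : PendantPath G k} (hpq : p ≠ q) :
    pendantVec θ p.1.2.2 q.1.1 = 0 := by
  by_contra h
  obtain ⟨j, hj, hq⟩ := p.2.exists_getVert_of_pendantVec_ne_zero h
  rcases j.eq_zero_or_pos with rfl | h0
  · exact hpq (PendantPath.fst_injective (by simpa using hq.symm))
  · have := q.2.2.2.1
    rw [hq, p.2.degree_getVert h0 hj] at this
    omega

theorem PendantPath.linearIndependent_pendantVec (hθ : sin (k * θ) ≠ 0) :
    LinearIndependent ℝ (fun p : PendantPath G k => pendantVec θ p.1.2.2) :=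
  linearIndependent_of_apply_eq_zero (fun p => p.1.1)
    (fun p => by rwa [p.2.pendantVec_start]) fun _ _ hpq => pendantVec_fst_eq_zero hpq

end

theorem laplacian_pendant_eigenvalue_general {V : Type*} [Fintype V] [DecidableEq V]
    (G : SimpleGraph V) [DecidableRel G.Adj] (k i : ℕ) (hi : 1 ≤ i)
    (hik : i ≤ k) :
    pendantPathCount G k - pendantAttachCount G k ≤
      Polynomial.rootMultiplicity (4 * Real.cos (π * i / (2 * k + 1)) ^ 2)
        (Matrix.charpoly (Matrix.diagonal (fun v => (G.degree v : ℝ)) - G.adjMatrix ℝ)) := by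
  classical
  have hL : Matrix.diagonal (fun v => (G.degree v : ℝ)) - G.adjMatrix ℝ = G.lapMatrix ℝ := rfl
  let _ : Fintype (PendantPath G k) := Fintype.ofFinite _
  rw [four_mul_cos_sq_eq_two_sub_two_mul_cos_pi_sub, hL, ← Matrix.charpoly_toLin',
    pendantPathCount, pendantAttachCount, Nat.card_eq_fintype_card, Nat.card_eq_fintype_card]
  refine le_trans ?_ (LinearMap.finrank_eigenspace_le _ _)
  rw [Module.End.eigenspace_def]
  refine LinearMap.card_sub_card_le_finrank_ker _
    (PendantPath.linearIndependent_pendantVec (sin_mul_pi_sub_two_mul_ne_zero hi hik))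
    (fun a => (Pi.single a.1 1 : V → ℝ)) fun ⟨⟨u, v, w⟩, hw⟩ => ?_
  simp only [LinearMap.sub_apply, Matrix.toLin'_apply, LinearMap.smul_apply,
    Module.End.one_apply, hw.lapMatrix_mulVec_pendantVec (sin_succ_mul_eq_sin_mul hik),
    sub_sub_cancel_left]
  exact Submodule.neg_mem _ (Submodule.smul_mem _ _
    (Submodule.subset_span ⟨⟨v, hw.2.2.2.1, u, w, hw⟩, rfl⟩))

/-- For any graph `G`, any `k ≥ 1` and any `1 ≤ i ≤ k`, the number `4 cos²(π i/(2k+1))`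
is a Laplacian eigenvalue of `G` with multiplicity at least `p_k(G) - q_k(G)`. -/
theorem laplacian_pendant_eigenvalue {V : Type*} [Fintype V] [DecidableEq V]
    (G : SimpleGraph V) [DecidableRel G.Adj] (k i : ℕ) (hk : 1 ≤ k) (hi : 1 ≤ i)
    (hik : i ≤ k) :
    pendantPathCount G k - pendantAttachCount G k ≤
      Polynomial.rootMultiplicity (4 * Real.cos (π * i / (2 * k + 1)) ^ 2)
        (Matrix.charpoly (Matrix.diagonal (fun v => (G.degree v : ℝ)) - G.adjMatrix ℝ)) :=
  laplacian_pendant_eigenvalue_general G k i hi hik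
end

section
/- For any graph G, the number 1 is a Laplacian eigenvalue of G with multiplicity at least p_1(G) − q_1(G), where p_1(G) is the number of pendant vertices (vertices of degree 1 adjacent to a vertex of degree ≥ 3) and q_1(G) is the number of vertices of degree ≥ 3 adjacent to at least one pendant vertex. -/
/-!
Write `L` for the Laplacian. If `u` is a pendant vertex with neighbour `v`, then `deg u = 1`
cancels the identity in row `u` of `L - 1`, which is therefore `-eᵥ`. So the `p₁` rows of
`L - 1` at pendant vertices take at most `q₁` distinct values, whence
`rank (L - 1) ≤ (n - p₁) + q₁`: the eigenspace of `1` has dimension at least `p₁ - q₁`, and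
geometric multiplicity is bounded by algebraic multiplicity.
-/

open Matrix Polynomial Real

open Finset

theorem Matrix.rank_le_card_add_card_of_row_mem {m n K : Type*} [Fintype m] [Fintype n]
    [Field K] (M : Matrix m n K) (s : Finset m) (t : Finset (n → K))
    (h : ∀ i ∉ s, M i ∈ t) : M.rank ≤ #s + #t := by
  classical
  calc M.rank = Module.finrank K (Submodule.span K (Set.range M.row)) :=
        M.rank_eq_finrank_span_row
    _ ≤ (((s.image M.row ∪ t : Finset (n → K)) : Set (n → K))).finrank K := by
        refine Submodule.finrank_mono (Submodule.span_mono ?_)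
        rintro _ ⟨i, rfl⟩
        by_cases hi : i ∈ s
        · exact mem_union_left _ (mem_image_of_mem _ hi)
        · exact mem_union_right _ (h i hi)
    _ ≤ #(s.image M.row ∪ t) := finrank_span_finset_le_card (R := K) _
    _ ≤ #s + #t := (card_union_le _ _).trans (Nat.add_le_add_right card_image_le _)

namespace SimpleGraph

variable {V : Type*} (G : SimpleGraph V)

theorem Walk.eq_of_length_eq_one {G : SimpleGraph V} {u v : V} {p q : G.Walk u v} (hp : p.length = 1)
    (hq : q.length = 1) : p = q := by
  cases p with
  | nil => simp at hp
  | cons _ p' =>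
    cases q with
    | nil => simp at hq
    | cons _ q' =>
      cases p' with
      | cons => simp at hp
      | nil =>
        cases q' with
        | cons => simp at hq
        | nil => rfl

variable [Fintype V] [DecidableEq V] [DecidableRel G.Adj]

theorem isPendantPath_one_iff {u v : V} (w : G.Walk u v) :
    IsPendantPath G w 1 ↔ w.length = 1 ∧ G.degree u = 1 ∧ 3 ≤ G.degree v := by
  refine ⟨fun ⟨_, hw, hu, hv, _⟩ => ⟨hw, hu, hv⟩, fun ⟨hw, hu, hv⟩ => ?_⟩
  have huv := Walk.adj_of_length_eq_one hw
  obtain rfl : w = huv.toWalk := Walk.eq_of_length_eq_one hw huv.length_toWalk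
  refine ⟨huv.isPath_toWalk, hw, hu, hv, ?_⟩
  simp [huv.support_toWalk]

def pendantVertices : Finset V :=
  {u | G.degree u = 1 ∧ ∃ v, G.Adj u v ∧ 3 ≤ G.degree v}

def quasiPendantVertices : Finset V :=
  {v | 3 ≤ G.degree v ∧ ∃ u, G.Adj u v ∧ G.degree u = 1}

theorem pendantPathCount_one : pendantPathCount G 1 = #G.pendantVertices := by
  rw [pendantPathCount, ← Nat.card_eq_finsetCard]
  refine Nat.card_eq_of_bijective
    (fun p => ⟨p.1.1, ?mem⟩) ⟨?inj, fun ⟨u, hu⟩ => ?surj⟩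
  case mem =>
    obtain ⟨-, hw, hu, hv, -⟩ := p.2
    simpa [pendantVertices] using ⟨hu, _, Walk.adj_of_length_eq_one hw, hv⟩
  case inj =>
    rintro ⟨⟨u, v, p⟩, hp⟩ ⟨⟨u', v', q⟩, hq⟩ h
    obtain rfl : u = u' := congrArg Subtype.val h
    rw [isPendantPath_one_iff] at hp hq
    obtain rfl : v = v' := by
      obtain ⟨w, -, hw⟩ := degree_eq_one_iff_existsUnique_adj.mp hp.2.1
      exact (hw v (Walk.adj_of_length_eq_one hp.1)).trans
        (hw v' (Walk.adj_of_length_eq_one hq.1)).symm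
    obtain rfl := Walk.eq_of_length_eq_one hp.1 hq.1
    rfl
  case surj =>
    obtain ⟨hu, v, huv, hv⟩ := (mem_filter.mp hu).2
    exact ⟨⟨⟨u, v, huv.toWalk⟩, (isPendantPath_one_iff G _).mpr ⟨huv.length_toWalk, hu, hv⟩⟩, rfl⟩

theorem pendantAttachCount_one : pendantAttachCount G 1 = #G.quasiPendantVertices := by
  rw [pendantAttachCount, ← Nat.card_eq_finsetCard]
  refine Nat.card_congr (Equiv.subtypeEquivRight fun v => ?_)
  simp only [quasiPendantVertices, mem_filter, mem_univ, true_and, isPendantPath_one_iff]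
  constructor
  · rintro ⟨hv, u, w, hw, hu, -⟩
    exact ⟨hv, u, Walk.adj_of_length_eq_one hw, hu⟩
  · rintro ⟨hv, u, huv, hu⟩
    exact ⟨hv, u, huv.toWalk, huv.length_toWalk, hu, hv⟩

theorem lapMatrix_sub_one_row_of_degree_eq_one {R : Type*} [Ring R] {u v : V}
    (hu : G.degree u = 1) (huv : G.Adj u v) :
    (G.lapMatrix R - 1) u = -Pi.single v 1 := by
  obtain ⟨w, -, hw⟩ := degree_eq_one_iff_existsUnique_adj.mp hu
  have hadj : ∀ x, G.Adj u x ↔ x = v :=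
    fun x => ⟨fun h => (hw x h).trans (hw v huv).symm, fun h => h ▸ huv⟩
  ext x
  by_cases hxu : u = x
  · subst hxu
    simp [lapMatrix, degMatrix, hu, huv.ne]
  · simp [lapMatrix, degMatrix, Pi.single_apply, hxu, hadj]

theorem rank_lapMatrix_sub_one_le {K : Type*} [Field K] :
    (G.lapMatrix K - 1).rank ≤ #G.pendantVerticesᶜ + #G.quasiPendantVertices := by
  classical
  refine ((G.lapMatrix K - 1).rank_le_card_add_card_of_row_mem _
    (G.quasiPendantVertices.image fun v => -Pi.single v 1) fun u hu => ?_).trans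
    (Nat.add_le_add_left card_image_le _)
  obtain ⟨hu, v, huv, hv⟩ : G.degree u = 1 ∧ ∃ v, G.Adj u v ∧ 3 ≤ G.degree v := by
    simpa [pendantVertices] using hu
  rw [lapMatrix_sub_one_row_of_degree_eq_one G hu huv]
  exact mem_image_of_mem _ (by simpa [quasiPendantVertices] using ⟨hv, u, huv, hu⟩)

theorem card_sub_card_le_finrank_eigenspace_one {K : Type*} [Field K] :
    #G.pendantVertices - #G.quasiPendantVertices ≤
      Module.finrank K (Module.End.eigenspace (toLin' (G.lapMatrix K)) 1) := by
  have hker : Module.End.eigenspace (toLin' (G.lapMatrix K)) 1 =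
      LinearMap.ker (toLin' (G.lapMatrix K - 1)) := by
    rw [Module.End.eigenspace_def, one_smul, map_sub, toLin'_one, Module.End.one_eq_id]
  have hnullity := LinearMap.finrank_range_add_finrank_ker (toLin' (G.lapMatrix K - 1))
  rw [Module.finrank_fintype_fun_eq_card] at hnullity
  have hrank := G.rank_lapMatrix_sub_one_le (K := K)
  rw [card_compl] at hrank
  have := card_le_univ G.pendantVertices
  rw [hker]
  change (G.lapMatrix K - 1).rank + _ = _ at hnullity
  omega

end SimpleGraph

/-- For any graph `G`, the number `1` is a Laplacian eigenvalue of `G` with multiplicity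
at least `p₁(G) - q₁(G)`, where `p₁(G)` counts pendant paths of length `1` (pendant
vertices attached to a vertex of degree `≥ 3`) and `q₁(G)` counts vertices of degree
`≥ 3` adjacent to at least one pendant vertex. -/
theorem laplacian_one_eigenvalue {V : Type*} [Fintype V] [DecidableEq V]
    (G : SimpleGraph V) [DecidableRel G.Adj] :
    pendantPathCount G 1 - pendantAttachCount G 1 ≤
      Polynomial.rootMultiplicity (1 : ℝ)
        (Matrix.charpoly (Matrix.diagonal (fun v => (G.degree v : ℝ)) - G.adjMatrix ℝ)) := by
  rw [G.pendantPathCount_one, G.pendantAttachCount_one]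
  calc #G.pendantVertices - #G.quasiPendantVertices
      ≤ Module.finrank ℝ (Module.End.eigenspace (toLin' (G.lapMatrix ℝ)) 1) :=
        G.card_sub_card_le_finrank_eigenspace_one
    _ ≤ (toLin' (G.lapMatrix ℝ)).charpoly.rootMultiplicity 1 :=
        LinearMap.finrank_eigenspace_le _ _
    _ = (G.lapMatrix ℝ).charpoly.rootMultiplicity 1 := by rw [Matrix.charpoly_toLin']
end

section
/- Let G be a graph with subdivision graph G̃. For any k ≥ 1 and 1 ≤ i ≤ 2k, the number 2·cos(πi/(2k+1)) is an adjacency eigenvalue of G̃ with multiplicity at least p_k(G) − q_k(G). -/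
open Matrix Polynomial Real

/-- The subdivision graph of `G`: each edge `uv` is replaced by a new vertex (indexed by
the edge itself) joined to `u` and `v`. -/
def subdivision {V : Type*} (G : SimpleGraph V) : SimpleGraph (V ⊕ G.edgeSet) where
  Adj x y :=
    (∃ v e, x = Sum.inl v ∧ y = Sum.inr e ∧ v ∈ (e : Sym2 V)) ∨
      (∃ v e, y = Sum.inl v ∧ x = Sum.inr e ∧ v ∈ (e : Sym2 V))
  symm := ⟨fun x y h =>
    h.elim (fun ⟨v, e, h1, h2, h3⟩ => Or.inr ⟨v, e, h1, h2, h3⟩)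
      (fun ⟨v, e, h1, h2, h3⟩ => Or.inl ⟨v, e, h1, h2, h3⟩)⟩
  loopless := ⟨fun x h => by
    rcases h with ⟨v, e, h1, h2, _⟩ | ⟨v, e, h1, h2, _⟩ <;> subst h1 <;> simp_all⟩

noncomputable instance {V : Type*} (G : SimpleGraph V) :
    DecidableRel (subdivision G).Adj := Classical.decRel _

/-!
On a pendant path `u = p₀, p₁, …, pₙ` of a graph, the vector with value `sin ((t + 1) θ)`
at `pₜ` (`t < n`) and `0` elsewhere is the eigenvector of the path `Pₙ` for `2 cos θ`
whenever `sin ((n + 1) θ) = 0`; since the leaf and the inner vertices have no neighbours off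
the path, it is an eigenvector of the whole graph except for a defect `sin (n θ)` at the
attachment vertex `pₙ`. Differences of such vectors for pendant paths with a common
attachment vertex cancel the defect, and keeping one path per attachment vertex out leaves
`p - q` of them, independent because each has its own leaf. In the subdivision graph a pendant
path of length `k` becomes one of length `2k`, and `θ = π i / (2k + 1)` gives the eigenvalue.
-/

open SimpleGraph Finset

theorem Matrix.card_le_rootMultiplicity_charpoly {K n ι : Type*} [Field K] [Fintype n]
    [DecidableEq n] [Fintype ι] (M : Matrix n n K) (μ : K) (x : ι → n → K)
    (hx : LinearIndependent K x) (hMx : ∀ i, M *ᵥ x i = μ • x i) :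
    Fintype.card ι ≤ M.charpoly.rootMultiplicity μ := by
  have hspan : Submodule.span K (Set.range x) ≤ Module.End.eigenspace (Matrix.toLin' M) μ := by
    rw [Submodule.span_le]
    rintro _ ⟨i, rfl⟩
    exact Module.End.mem_eigenspace_iff.2 (by rw [Matrix.toLin'_apply, hMx])
  calc Fintype.card ι = Module.finrank K (Submodule.span K (Set.range x)) :=
        (finrank_span_eq_card hx).symm
    _ ≤ Module.finrank K (Module.End.eigenspace (Matrix.toLin' M) μ) :=
        Submodule.finrank_mono hspan
    _ ≤ M.charpoly.rootMultiplicity μ := by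
        simpa using LinearMap.finrank_eigenspace_le (Matrix.toLin' M) μ

theorem linearIndependent_of_apply_eq_ite {K ι W : Type*} [Field K] [DecidableEq ι]
    (x : ι → W → K) (a : ι → W) {c : K} (hc : c ≠ 0)
    (h : ∀ i j, x i (a j) = if i = j then c else 0) : LinearIndependent K x := by
  rw [linearIndependent_iff']
  intro s g hg i hi
  have := congrFun hg (a i)
  simp only [Finset.sum_apply, Pi.smul_apply, smul_eq_mul, h, mul_ite, mul_zero,
    Finset.sum_ite_eq', if_pos hi, Pi.zero_apply] at this
  exact (mul_eq_zero.1 this).resolve_right hc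

theorem SimpleGraph.adjMatrix_mulVec_single_one {W R : Type*} [Fintype W] [DecidableEq W]
    [NonAssocSemiring R] (H : SimpleGraph W) [DecidableRel H.Adj] (x : W) :
    H.adjMatrix R *ᵥ Pi.single x 1 = ∑ y ∈ H.neighborFinset x, Pi.single y 1 := by
  ext z
  simp [Finset.sum_apply, Pi.single_apply, H.adj_comm]

theorem SimpleGraph.neighborFinset_eq_of_subset_of_degree_le {W : Type*} [Fintype W]
    {H : SimpleGraph W} [DecidableRel H.Adj] {x : W} {s : Finset W}
    (hs : s ⊆ H.neighborFinset x) (h : H.degree x ≤ #s) : H.neighborFinset x = s :=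
  (Finset.eq_of_subset_of_card_le hs (by rwa [card_neighborFinset_eq_degree])).symm

noncomputable def SimpleGraph.Walk.sineVector {W : Type*} [DecidableEq W]
    {H : SimpleGraph W} {u v : W} (p : H.Walk u v) (θ : ℝ) : W → ℝ :=
  ∑ t ∈ range p.length, Real.sin ((t + 1) * θ) • Pi.single (p.getVert t) 1

namespace IsPendantPath

variable {W : Type*} [Fintype W] [DecidableEq W] {H : SimpleGraph W} [DecidableRel H.Adj]
  {u v : W} {p : H.Walk u v} {n : ℕ}

theorem length_pos_s15 (hp : IsPendantPath H p n) : 0 < n := by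
  obtain ⟨-, hlen, hu, hv, -⟩ := hp
  by_contra! h0
  have := p.eq_of_length_eq_zero (by omega)
  subst this
  omega

theorem getVert_injOn (hp : IsPendantPath H p n) : Set.InjOn p.getVert {t | t ≤ n} :=
  hp.2.1 ▸ hp.1.getVert_injOn

theorem degree_getVert_s15 (hp : IsPendantPath H p n) {t : ℕ} (ht : 0 < t) (htn : t < n) :
    H.degree (p.getVert t) = 2 := by
  obtain ⟨hpath, hlen, -, -, hint⟩ := hp
  refine hint _ (p.getVert_mem_support t) ?_ ?_
  · rw [Ne, hpath.getVert_eq_start_iff (by omega)]; omega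
  · rw [Ne, hpath.getVert_eq_end_iff (by omega)]; omega

theorem neighborFinset_start_s15 (hp : IsPendantPath H p n) :
    H.neighborFinset u = {p.getVert 1} := by
  refine neighborFinset_eq_of_subset_of_degree_le ?_ (by simp [hp.2.2.1])
  simpa using p.adj_getVert_succ (i := 0) (by rw [hp.2.1]; exact hp.length_pos_s15)

theorem neighborFinset_getVert_succ (hp : IsPendantPath H p n) {s : ℕ} (hs : s + 1 < n) :
    H.neighborFinset (p.getVert (s + 1)) = {p.getVert s, p.getVert (s + 2)} := by
  have hlen := hp.2.1
  have hne : p.getVert s ≠ p.getVert (s + 2) := fun h =>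
    absurd (hp.getVert_injOn (by simp; omega) (by simp; omega) h) (by omega)
  refine neighborFinset_eq_of_subset_of_degree_le ?_ ?_
  · intro y hy
    rw [mem_neighborFinset]
    rcases Finset.mem_insert.1 hy with rfl | hy
    · exact (p.adj_getVert_succ (by omega)).symm
    · exact (Finset.mem_singleton.1 hy) ▸ p.adj_getVert_succ (by omega)
  · rw [hp.degree_getVert_s15 (by omega) hs, Finset.card_pair hne]

theorem unique (hp : IsPendantPath H p n) {v' : W} {q : H.Walk u v'}
    (hq : IsPendantPath H q n) : (⟨v, p⟩ : Σ x, H.Walk u x) = ⟨v', q⟩ := by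
  have hstep : ∀ t, t + 1 ≤ n →
      p.getVert t = q.getVert t ∧ p.getVert (t + 1) = q.getVert (t + 1) := by
    intro t
    induction t with
    | zero =>
      intro _
      have := (mem_neighborFinset ..).2 (q.adj_getVert_succ (i := 0)
        (by rw [hq.2.1]; exact hq.length_pos_s15))
      rw [Walk.getVert_zero, hp.neighborFinset_start_s15] at this
      simpa [eq_comm] using this
    | succ t ih =>
      intro ht
      obtain ⟨h0, h1⟩ := ih (by omega)
      refine ⟨h1, ?_⟩
      have hadj := (mem_neighborFinset ..).2
        (q.adj_getVert_succ (i := t + 1) (by rw [hq.2.1]; omega))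
      rw [← h1, hp.neighborFinset_getVert_succ (by omega), Finset.mem_insert,
        Finset.mem_singleton, h0] at hadj
      refine (hadj.resolve_left fun h => ?_).symm
      exact absurd (hq.getVert_injOn (by simp; omega) (by simp; omega) h) (by omega)
  have hagree : ∀ t ≤ n, p.getVert t = q.getVert t := fun t ht =>
    match t with
    | 0 => by simp
    | t + 1 => (hstep t ht).2
  have hv : v = v' := by
    have := hagree n le_rfl
    rwa [← hp.2.1, p.getVert_length, hp.2.1, ← hq.2.1, q.getVert_length] at this
  subst hv
  exact congrArg _ (Walk.ext_getVert_le_length (hp.2.1.trans hq.2.1.symm)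
    fun t ht => hagree t (hp.2.1 ▸ ht))

theorem start_injective :
    Function.Injective fun t : {p : Σ u v, H.Walk u v // IsPendantPath H p.2.2 n} => t.1.1 := by
  rintro ⟨⟨u, v, p⟩, hp⟩ ⟨⟨u', v', q⟩, hq⟩ (rfl : u = u')
  exact Subtype.ext (congrArg (Sigma.mk u) (hp.unique hq))

theorem adjMatrix_mulVec_sineVector (hp : IsPendantPath H p n) {θ : ℝ}
    (hθ : Real.sin ((n + 1) * θ) = 0) :
    H.adjMatrix ℝ *ᵥ p.sineVector θ =
      (2 * Real.cos θ) • p.sineVector θ + Real.sin (n * θ) • Pi.single v 1 := by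
  obtain ⟨m, rfl⟩ : ∃ m, n = m + 1 := ⟨n - 1, by have := hp.length_pos_s15; omega⟩
  set f : ℕ → ℝ := fun t => Real.sin (t * θ) with hf
  set e : ℕ → W → ℝ := fun t => Pi.single (p.getVert t) 1 with he
  have hrec : ∀ t : ℕ, 2 * Real.cos θ * f (t + 1) = f t + f (t + 2) := by
    intro t
    simp only [hf]
    push_cast
    rw [show ((t : ℝ) + 2) * θ = (t + 1) * θ + θ by ring,
      show (t : ℝ) * θ = (t + 1) * θ - θ by ring, Real.sin_add, Real.sin_sub]
    ring
  have hf0 : f 0 = 0 := by simp [hf]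
  have hfm : f (m + 2) = 0 := by simpa [hf, add_assoc, one_add_one_eq_two] using hθ
  have hv : v = p.getVert (m + 1) := by rw [← hp.2.1, p.getVert_length]
  have hx : p.sineVector θ = ∑ t ∈ range (m + 1), f (t + 1) • e t := by
    simp [Walk.sineVector, hp.2.1, hf, he]
  have hA : H.adjMatrix ℝ *ᵥ p.sineVector θ =
      f 1 • e 1 + ∑ s ∈ range m, f (s + 2) • (e s + e (s + 2)) := by
    rw [hx, Finset.sum_range_succ', Matrix.mulVec_add, Matrix.mulVec_sum, add_comm]
    congr 1
    · rw [Matrix.mulVec_smul, he]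
      dsimp only
      rw [Walk.getVert_zero, adjMatrix_mulVec_single_one, hp.neighborFinset_start_s15,
        Finset.sum_singleton]
    · refine Finset.sum_congr rfl fun s hs => ?_
      rw [Finset.mem_range] at hs
      rw [Matrix.mulVec_smul, he, adjMatrix_mulVec_single_one,
        hp.neighborFinset_getVert_succ (by omega), Finset.sum_pair fun h =>
          absurd (hp.getVert_injOn (by simp; omega) (by simp; omega) h) (by omega)]
  have h1 : f 1 • e 1 + ∑ s ∈ range m, f (s + 2) • e (s + 2) =
      ∑ t ∈ range (m + 1), f (t + 1) • e (t + 1) := by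
    rw [Finset.sum_range_succ' (fun t => f (t + 1) • e (t + 1)), add_comm]
  have h2 : ∑ t ∈ range (m + 1), f (t + 1) • e (t + 1) =
      ∑ t ∈ range (m + 2), f t • e t := by
    rw [Finset.sum_range_succ' (fun t => f t • e t), hf0, zero_smul, add_zero]
  have h3 : ∑ t ∈ range (m + 1), f (t + 2) • e t = ∑ s ∈ range m, f (s + 2) • e s := by
    rw [Finset.sum_range_succ, hfm, zero_smul, add_zero]
  rw [hA, hx, hv, Finset.smul_sum]
  change _ = _ + f (m + 1) • e (m + 1)
  simp only [smul_smul, hrec, add_smul, Finset.sum_add_distrib, smul_add, h3]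
  rw [add_right_comm, ← Finset.sum_range_succ (fun t => f t • e t), ← h2, ← h1]
  abel

theorem sineVector_apply_of_degree_eq_one (hp : IsPendantPath H p n) (θ : ℝ) {x : W}
    (hx : H.degree x = 1) : p.sineVector θ x = if u = x then Real.sin θ else 0 := by
  rw [Walk.sineVector, Finset.sum_apply, Finset.sum_eq_single 0]
  · simp [Pi.single_apply, eq_comm]
  · intro t ht ht0
    have hdeg := hp.degree_getVert_s15 (Nat.pos_of_ne_zero ht0) (hp.2.1 ▸ Finset.mem_range.1 ht)
    have hne : p.getVert t ≠ x := fun h => by subst h; omega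
    simp [hne.symm]
  · intro h
    exact absurd (Finset.mem_range.2 (hp.2.1 ▸ hp.length_pos_s15)) h

end IsPendantPath

theorem SimpleGraph.card_sub_card_ends_le_rootMultiplicity {W ι : Type*} [Fintype W]
    [DecidableEq W] {H : SimpleGraph W} [DecidableRel H.Adj] {n : ℕ}
    (P : ι → Σ u v : W, H.Walk u v) (hP : ∀ i, IsPendantPath H (P i).2.2 n)
    (hstart : Function.Injective fun i => (P i).1) {θ : ℝ}
    (hθ : Real.sin ((n + 1) * θ) = 0) (hsin : Real.sin θ ≠ 0) :
    Nat.card ι - Nat.card (Set.range fun i => (P i).2.1) ≤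
      (H.adjMatrix ℝ).charpoly.rootMultiplicity (2 * Real.cos θ) := by
  classical
  have : Finite ι := Finite.of_injective _ hstart
  have : Fintype ι := Fintype.ofFinite ι
  set tip : ι → W := fun i => (P i).2.1
  set rep := Set.rangeSplitting tip
  let rest := {i // i ∉ Set.range rep}
  have hcard : Nat.card ι - Nat.card (Set.range tip) = Fintype.card rest := by
    rw [Fintype.card_subtype_compl, Nat.card_eq_fintype_card, Nat.card_eq_fintype_card,
      ← Set.card_range_of_injective (Set.rangeSplitting_injective tip)]
  let x : rest → W → ℝ := fun j =>
    (P j).2.2.sineVector θ - (P (rep ⟨tip j, j, rfl⟩)).2.2.sineVector θ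
  have heig : ∀ j, H.adjMatrix ℝ *ᵥ x j = (2 * Real.cos θ) • x j := by
    intro j
    have htip : tip (rep ⟨tip j, j, rfl⟩) = tip j := Set.apply_rangeSplitting tip _
    simp only [x, Matrix.mulVec_sub, (hP _).adjMatrix_mulVec_sineVector hθ, smul_sub]
    change _ + _ • Pi.single (tip j) 1 - (_ + _ • Pi.single (tip (rep _)) 1) = _
    rw [htip]
    abel
  have hli : LinearIndependent ℝ x := by
    refine linearIndependent_of_apply_eq_ite x (fun j => (P j).1) hsin fun j j' => ?_
    have hleaf := (hP j').2.2.1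
    simp only [x, Pi.sub_apply, (hP _).sineVector_apply_of_degree_eq_one θ hleaf,
      hstart.eq_iff]
    have hrep : rep ⟨tip j, j, rfl⟩ ≠ j' := fun h => j'.2 ⟨_, h⟩
    simp only [hrep, if_false, sub_zero]
    exact if_congr Subtype.val_inj rfl rfl
  exact hcard ▸ Matrix.card_le_rootMultiplicity_charpoly _ _ x hli heig

namespace subdivision

variable {V : Type*} {G : SimpleGraph V}

@[simp] theorem adj_inl_inr {a : V} {e : G.edgeSet} :
    (subdivision G).Adj (.inl a) (.inr e) ↔ a ∈ (e : Sym2 V) := by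
  simp [subdivision]

@[simp] theorem adj_inr_inl {a : V} {e : G.edgeSet} :
    (subdivision G).Adj (.inr e) (.inl a) ↔ a ∈ (e : Sym2 V) := by
  simp [subdivision]

@[simp] theorem not_adj_inl_inl {a b : V} : ¬ (subdivision G).Adj (.inl a) (.inl b) := by
  simp [subdivision]

@[simp] theorem not_adj_inr_inr {e f : G.edgeSet} :
    ¬ (subdivision G).Adj (.inr e) (.inr f) := by
  simp [subdivision]

def walk : ∀ {u v : V}, G.Walk u v → (subdivision G).Walk (.inl u) (.inl v)
  | _, _, .nil => .nil
  | u, _, .cons (v := w) h p =>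
    .cons (adj_inl_inr (e := ⟨s(u, w), h⟩).2 (Sym2.mem_mk_left _ _))
      (.cons (adj_inr_inl (e := ⟨s(u, w), h⟩).2 (Sym2.mem_mk_right _ _)) (walk p))

variable {u v : V}

@[simp] theorem length_walk (p : G.Walk u v) : (walk p).length = 2 * p.length := by
  induction p with
  | nil => rfl
  | cons h p ih => simp only [walk, Walk.length_cons, ih]; ring

theorem inl_mem_support_walk {p : G.Walk u v} {x : V} :
    .inl x ∈ (walk p).support ↔ x ∈ p.support := by
  induction p with
  | nil => simp [walk]
  | cons h p ih => simp [walk, ih]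

theorem inr_mem_support_walk {p : G.Walk u v} {e : G.edgeSet} :
    .inr e ∈ (walk p).support ↔ (e : Sym2 V) ∈ p.edges := by
  induction p with
  | nil => simp [walk]
  | cons h p ih => simp [walk, ih, Subtype.ext_iff, eq_comm]

theorem isPath_walk {p : G.Walk u v} (hp : p.IsPath) : (walk p).IsPath := by
  induction p with
  | nil => exact Walk.IsPath.nil
  | cons h p ih =>
    rw [Walk.cons_isPath_iff] at hp
    simp only [walk, Walk.cons_isPath_iff, ih hp.1, inl_mem_support_walk,
      inr_mem_support_walk, Walk.support_cons, List.mem_cons, reduceCtorEq,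
      true_and, false_or]
    exact ⟨fun he => hp.2 (p.fst_mem_support_of_mem_edges he), hp.2⟩

variable [Fintype V] [DecidableEq V] [DecidableRel G.Adj]

theorem degree_inl (x : V) : (subdivision G).degree (.inl x) = G.degree x := by
  rw [← card_neighborSet_eq_degree, ← card_incidenceSet_eq_degree]
  have : IsEmpty {a : V // .inl a ∈ (subdivision G).neighborSet (.inl x)} :=
    ⟨fun a => by simpa using a.2⟩
  exact Fintype.card_congr <| Equiv.subtypeSum.trans <| (Equiv.emptySum _ _).trans <|
    (Equiv.subtypeEquivRight fun e => by simp).trans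
      (Equiv.subtypeSubtypeEquivSubtypeInter _ (x ∈ ·))

theorem degree_inr (e : G.edgeSet) : (subdivision G).degree (.inr e) = 2 := by
  obtain ⟨e, he⟩ := e
  induction e using Sym2.ind with
  | h a b =>
    have hab : (.inl a : V ⊕ G.edgeSet) ≠ .inl b := by simpa using G.ne_of_adj he
    rw [← card_neighborFinset_eq_degree, ← Finset.card_pair hab]
    congr 1
    ext (y | y) <;> simp [Sym2.mem_iff, eq_comm]

theorem isPendantPath_walk {u v : V} {w : G.Walk u v} {k : ℕ} (hw : IsPendantPath G w k) :
    IsPendantPath (subdivision G) (walk w) (2 * k) := by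
  obtain ⟨hpath, hlen, hu, hv, hint⟩ := hw
  refine ⟨isPath_walk hpath, by simp [hlen], by rwa [degree_inl], by rwa [degree_inl], ?_⟩
  rintro (x | e) hx hxu hxv
  · rw [degree_inl]
    exact hint x (inl_mem_support_walk.1 hx) (by rintro rfl; exact hxu rfl)
      (by rintro rfl; exact hxv rfl)
  · exact degree_inr e

end subdivision

theorem subdivision_adj_pendant_eigenvalue_general {V : Type*} [Fintype V] [DecidableEq V]
    (G : SimpleGraph V) [DecidableRel G.Adj] (k i : ℕ) (hi : 1 ≤ i)
    (hik : i ≤ 2 * k) :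
    pendantPathCount G k - pendantAttachCount G k ≤
      Polynomial.rootMultiplicity (2 * Real.cos (π * i / (2 * k + 1)))
        (Matrix.charpoly ((subdivision G).adjMatrix ℝ)) := by
  set θ := π * i / (2 * k + 1)
  have hθ : sin ((((2 * k : ℕ) : ℝ) + 1) * θ) = 0 := by
    rw [show (((2 * k : ℕ) : ℝ) + 1) * θ = i * π by simp only [θ]; push_cast; field_simp]
    exact sin_nat_mul_pi i
  have hsin : sin θ ≠ 0 := by
    have hi' : (i : ℝ) < 2 * k + 1 := by exact_mod_cast Nat.lt_succ_of_le hik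
    refine (sin_pos_of_pos_of_lt_pi
      (div_pos (mul_pos pi_pos (by exact_mod_cast hi)) (by positivity)) ?_).ne'
    rw [div_lt_iff₀ (by positivity)]
    exact mul_lt_mul_of_pos_left hi' pi_pos
  let P (t : {p : Σ u v, G.Walk u v // IsPendantPath G p.2.2 k}) :
      Σ a b, (subdivision G).Walk a b := ⟨_, _, subdivision.walk t.1.2.2⟩
  have hends : Nat.card (Set.range fun t => (P t).2.1) ≤ pendantAttachCount G k := by
    refine Nat.card_le_card_of_surjective (fun q => ⟨.inl q.1, ?_⟩) ?_
    · obtain ⟨-, u, w, hw⟩ := q.2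
      exact ⟨⟨⟨u, _, w⟩, hw⟩, rfl⟩
    · rintro ⟨_, ⟨⟨u, v, w⟩, hw⟩, rfl⟩
      exact ⟨⟨v, hw.2.2.2.1, u, w, hw⟩, rfl⟩
  calc pendantPathCount G k - pendantAttachCount G k
      ≤ pendantPathCount G k - Nat.card (Set.range fun t => (P t).2.1) :=
        Nat.sub_le_sub_left hends _
    _ ≤ _ := card_sub_card_ends_le_rootMultiplicity P
        (fun t => subdivision.isPendantPath_walk t.2)
        (fun t t' h => IsPendantPath.start_injective (Sum.inl_injective h)) hθ hsin

/-- For any `k ≥ 1` and `1 ≤ i ≤ 2k`, the number `2 cos (π i/(2k+1))` is an adjacency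
eigenvalue of the subdivision graph of `G` with multiplicity at least `p_k(G) - q_k(G)`. -/
theorem subdivision_adj_pendant_eigenvalue {V : Type*} [Fintype V] [DecidableEq V]
    (G : SimpleGraph V) [DecidableRel G.Adj] (k i : ℕ) (hk : 1 ≤ k) (hi : 1 ≤ i)
    (hik : i ≤ 2 * k) :
    pendantPathCount G k - pendantAttachCount G k ≤
      Polynomial.rootMultiplicity (2 * Real.cos (π * i / (2 * k + 1)))
        (Matrix.charpoly ((subdivision G).adjMatrix ℝ)) :=
  subdivision_adj_pendant_eigenvalue_general G k i hi hik
end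

section
/- A graph G is bipartite if and only if its Laplacian matrix L(G) = Δ − A and signless Laplacian matrix Q(G) = Δ + A are similar matrices. -/
/-!
A 2-colouring `c` gives the involutive diagonal matrix `D = diag((-1)^c(v))`, and `D L D = Q` because
`D` flips the sign of exactly the off-diagonal entries on edges.

Conversely, similar matrices have kernels of equal dimension, and `dim ker L` is the number of
connected components. A vector in `ker Q` satisfies `x i = -x j` along every edge, so it vanishes on
any component carrying an odd closed walk and is determined by one value on each other component;
for a non-bipartite graph this makes `dim ker Q` strictly smaller.
-/

open Matrix

namespace Matrix

theorem finrank_ker_toLin'_eq_of_mul_mul_inv_eq {n K : Type*} [Fintype n] [DecidableEq n]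
    [Field K] {S A B : Matrix n n K} (hS : IsUnit S) (h : S * A * S⁻¹ = B) :
    Module.finrank K (LinearMap.ker A.toLin') = Module.finrank K (LinearMap.ker B.toLin') := by
  have hdet : IsUnit S.det := (isUnit_iff_isUnit_det S).mp hS
  have hrank : A.rank = B.rank := by
    rw [← h, rank_mul_eq_left_of_isUnit_det S⁻¹ (S * A) (isUnit_nonsing_inv_det S hdet),
      rank_mul_eq_right_of_isUnit_det S A hdet]
  have hA : A.rank + _ = _ := LinearMap.finrank_range_add_finrank_ker A.toLin'
  have hB : B.rank + _ = _ := LinearMap.finrank_range_add_finrank_ker B.toLin'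
  omega

end Matrix

namespace SimpleGraph

variable {V : Type*} {G : SimpleGraph V}

theorem Coloring.neg_one_pow_mul_neg_one_pow_of_adj {R : Type*} [Monoid R] [HasDistribNeg R]
    (c : G.Coloring (Fin 2)) {u v : V} (h : G.Adj u v) :
    (-1 : R) ^ (c u : ℕ) * (-1) ^ (c v : ℕ) = -1 := by
  have hne : (c u : ℕ) ≠ c v := Fin.val_ne_of_ne (c.valid h)
  rw [← pow_add, Odd.neg_one_pow ⟨0, by omega⟩]

theorem Walk.apply_eq_neg_one_pow_length_mul {R : Type*} [Ring R] {x : V → R}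
    (hx : ∀ ⦃i j⦄, G.Adj i j → x i = -x j) {u v : V} (p : G.Walk u v) :
    x u = (-1) ^ p.length * x v := by
  induction p with
  | nil => simp
  | cons h p ih => rw [length_cons, pow_succ, hx h, ih]; noncomm_ring

theorem apply_eq_zero_of_odd_loop {R : Type*} [Ring R] [NoZeroDivisors R] [CharZero R]
    {x : V → R} (hx : ∀ ⦃i j⦄, G.Adj i j → x i = -x j) {u v : V} (w : G.Walk u u)
    (hw : Odd w.length) (huv : G.Reachable u v) : x v = 0 := by
  obtain ⟨p⟩ := huv
  have hu : x u = -x u := by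
    rw [← neg_one_mul, ← hw.neg_one_pow]
    exact w.apply_eq_neg_one_pow_length_mul hx
  rw [p.reverse.apply_eq_neg_one_pow_length_mul hx, CharZero.eq_neg_self_iff.mp hu, mul_zero]

variable [Fintype V] [DecidableEq V] [DecidableRel G.Adj]

variable (G) in
def signlessLapMatrix (R : Type*) [AddMonoidWithOne R] : Matrix V V R :=
  G.degMatrix R + G.adjMatrix R

variable (G) in
theorem diagonal_mul_lapMatrix_mul_diagonal {R : Type*} [CommRing R] {s : V → R}
    (hs : ∀ v, s v * s v = 1) (hadj : ∀ ⦃u v⦄, G.Adj u v → s u * s v = -1) :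
    diagonal s * G.lapMatrix R * diagonal s = G.signlessLapMatrix R := by
  ext i j
  simp only [diagonal_mul, mul_diagonal, lapMatrix, signlessLapMatrix, degMatrix,
    Matrix.sub_apply, Matrix.add_apply, diagonal_apply, adjMatrix_apply]
  by_cases hij : i = j
  · subst hij
    simp only [if_true, G.irrefl, if_false, sub_zero, add_zero]
    linear_combination (G.degree i : R) * hs i
  · by_cases h : G.Adj i j
    · simp only [hij, h, if_true, if_false, zero_sub]
      linear_combination -hadj h
    · simp [hij, h]

theorem Colorable.exists_isUnit_mul_lapMatrix_mul_inv_eq {R : Type*} [CommRing R]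
    (h : G.Colorable 2) :
    ∃ S : Matrix V V R, IsUnit S ∧ S * G.lapMatrix R * S⁻¹ = G.signlessLapMatrix R := by
  obtain ⟨c⟩ := h
  set S : Matrix V V R := diagonal fun v => (-1) ^ (c v : ℕ)
  have hs : ∀ v, (-1 : R) ^ (c v : ℕ) * (-1) ^ (c v : ℕ) = 1 := fun v => by
    rw [← pow_add, ← two_mul, pow_mul, neg_one_sq, one_pow]
  have hSS : S * S = 1 := by
    rw [diagonal_mul_diagonal, ← diagonal_one]
    exact congrArg diagonal (funext hs)
  refine ⟨S, IsUnit.of_mul_eq_one S hSS, ?_⟩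
  rw [inv_eq_right_inv hSS]
  exact G.diagonal_mul_lapMatrix_mul_diagonal hs fun u v h =>
    c.neg_one_pow_mul_neg_one_pow_of_adj h

variable (G)

theorem dotProduct_mulVec_signlessLapMatrix {R : Type*} [Field R] [CharZero R] (x : V → R) :
    x ⬝ᵥ (G.signlessLapMatrix R *ᵥ x) =
      (∑ i : V, ∑ j : V, if G.Adj i j then (x i + x j) ^ 2 else 0) / 2 := by
  simp_rw [signlessLapMatrix, add_mulVec, dotProduct_add, dotProduct_mulVec_degMatrix,
    dotProduct_mulVec_adjMatrix, ← Finset.sum_add_distrib, degree_eq_sum_if_adj, Finset.sum_mul,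
    ite_mul, one_mul, zero_mul, ← Finset.sum_add_distrib, ite_add_ite, add_zero]
  rw [← add_self_div_two (∑ i : V, ∑ j : V, _)]
  conv_lhs => enter [1, 2, 2, i, 2, j]; rw [if_congr (adj_comm G i j) rfl rfl]
  conv_lhs => enter [1, 2]; rw [Finset.sum_comm]
  simp_rw [← Finset.sum_add_distrib, ite_add_ite]
  congr 2 with i
  congr 2 with j
  ring_nf

theorem eq_neg_of_adj_of_signlessLapMatrix_mulVec_eq_zero {R : Type*} [Field R] [LinearOrder R]
    [IsStrictOrderedRing R] {x : V → R} (hx : G.signlessLapMatrix R *ᵥ x = 0) {i j : V}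
    (h : G.Adj i j) : x i = -x j := by
  have hsum := G.dotProduct_mulVec_signlessLapMatrix x
  rw [hx, dotProduct_zero, eq_comm, div_eq_zero_iff, or_iff_left two_ne_zero,
    Finset.sum_eq_zero_iff_of_nonneg fun _ _ => Finset.sum_nonneg fun _ _ => by positivity]
    at hsum
  have hij := (Finset.sum_eq_zero_iff_of_nonneg fun _ _ => by positivity).mp
    (hsum i (Finset.mem_univ i)) j (Finset.mem_univ j)
  rw [if_pos h, sq_eq_zero_iff] at hij
  linear_combination hij

theorem finrank_ker_toLin'_signlessLapMatrix_lt (h : ¬G.Colorable 2) :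
    Module.finrank ℝ (LinearMap.ker (G.signlessLapMatrix ℝ).toLin') <
      Fintype.card G.ConnectedComponent := by
  classical
  obtain ⟨u, w, hw⟩ : ∃ u, ∃ w : G.Walk u u, Odd w.length := by
    simpa [two_colorable_iff_forall_loop_even] using h
  set c₀ := G.connectedComponentMk u
  let f : LinearMap.ker (G.signlessLapMatrix ℝ).toLin' →ₗ[ℝ] ({c // c ≠ c₀} → ℝ) :=
    { toFun x c := x.1 c.1.out
      map_add' _ _ := rfl
      map_smul' _ _ := rfl }
  have hf : Function.Injective f := by
    rw [← LinearMap.ker_eq_bot, Submodule.eq_bot_iff]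
    rintro ⟨x, hx⟩ hfx
    have hadj : ∀ ⦃i j⦄, G.Adj i j → x i = -x j := fun i j h =>
      G.eq_neg_of_adj_of_signlessLapMatrix_mulVec_eq_zero hx h
    ext v
    change x v = 0
    by_cases hv : G.connectedComponentMk v = c₀
    · exact apply_eq_zero_of_odd_loop hadj w hw (ConnectedComponent.exact hv.symm)
    · obtain ⟨p⟩ := ConnectedComponent.exact (Quot.out_eq (G.connectedComponentMk v))
      have hout : x (G.connectedComponentMk v).out = 0 := congrFun hfx ⟨_, hv⟩
      rw [p.reverse.apply_eq_neg_one_pow_length_mul hadj, hout, mul_zero]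
  calc Module.finrank ℝ (LinearMap.ker (G.signlessLapMatrix ℝ).toLin')
      ≤ Module.finrank ℝ ({c // c ≠ c₀} → ℝ) := LinearMap.finrank_le_finrank_of_injective hf
    _ = Fintype.card {c // c ≠ c₀} := Module.finrank_fintype_fun_eq_card ℝ
    _ < Fintype.card G.ConnectedComponent := Fintype.card_subtype_lt (not_not.2 rfl)

end SimpleGraph

/-- A graph `G` is bipartite (2-colorable) if and only if its Laplacian matrix
`L(G) = Δ - A` and signless Laplacian matrix `Q(G) = Δ + A` are similar. -/
theorem bipartite_iff_laplacian_similar_signless {V : Type*} [Fintype V] [DecidableEq V]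
    (G : SimpleGraph V) [DecidableRel G.Adj] :
    G.Colorable 2 ↔
      ∃ S : Matrix V V ℝ, IsUnit S ∧
        S * (Matrix.diagonal (fun v => (G.degree v : ℝ)) - G.adjMatrix ℝ) * S⁻¹ =
          Matrix.diagonal (fun v => (G.degree v : ℝ)) + G.adjMatrix ℝ := by
  refine ⟨SimpleGraph.Colorable.exists_isUnit_mul_lapMatrix_mul_inv_eq, ?_⟩
  rintro ⟨S, hS, hconj⟩
  by_contra h
  have hker : Fintype.card G.ConnectedComponent =
      Module.finrank ℝ (LinearMap.ker (G.signlessLapMatrix ℝ).toLin') :=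
    G.card_connectedComponent_eq_finrank_ker_toLin'_lapMatrix.trans
      (finrank_ker_toLin'_eq_of_mul_mul_inv_eq hS hconj)
  exact (G.finrank_ker_toLin'_signlessLapMatrix_lt h).ne' hker
end
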